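/- Let F be a field and A ∈ M_2(F) a nonzero matrix. Then the Schur map S_A is multiplicative if and only if there exists a nonzero λ ∈ F such that A = [[1, λ], [λ^{-1}, 1]]. -/

import Mathlib

/-!
Testing multiplicativity of `B ↦ A ⊙ B` on matrix units `E i j * E j k = E i k` shows it is
equivalent to `A i k = A i j * A j k` for all indices. For a nonzero `2 × 2` matrix this forces
`A 0 1 ≠ 0`, both diagonal entries equal to `1`, and `A 1 0 = (A 0 1)⁻¹`.
-/

open Matrix

theorem hadamard_single {n R : Type*} [DecidableEq n] [MulZeroClass R]
    (A : Matrix n n R) (i j : n) (c : R) : A ⊙ single i j c = single i j (A i j * c) := by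
  ext i' j'
  by_cases h : i = i' ∧ j = j'
  · obtain ⟨rfl, rfl⟩ := h
    simp
  · simp [h]

theorem forall_hadamard_mul_eq_iff {n R : Type*} [Fintype n] [DecidableEq n] [CommRing R]
    (A : Matrix n n R) :
    (∀ B C : Matrix n n R, A ⊙ (B * C) = (A ⊙ B) * (A ⊙ C)) ↔
      ∀ i j k, A i k = A i j * A j k := by
  constructor
  · intro h i j k
    simpa [hadamard_single, single_mul_single_same] using
      congrFun₂ (h (single i j 1) (single j k 1)) i k
  · intro h B C
    ext i k
    simp only [hadamard_apply, mul_apply, Finset.mul_sum]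
    refine Finset.sum_congr rfl fun j _ => ?_
    rw [h i j k]
    ring

theorem fin_two_cocycle_iff {F : Type*} [Field F] {A : Matrix (Fin 2) (Fin 2) F} (hA : A ≠ 0) :
    (∀ i j k, A i k = A i j * A j k) ↔ ∃ lam : F, lam ≠ 0 ∧ A = !![1, lam; lam⁻¹, 1] := by
  constructor
  · intro h
    have h00 : A 0 0 = A 0 1 * A 1 0 := h 0 1 0
    have h11 : A 1 1 = A 1 0 * A 0 1 := h 1 0 1
    have h01 : A 0 1 = A 0 0 * A 0 1 := h 0 0 1
    have h01' : A 0 1 = A 0 1 * A 1 1 := h 0 1 1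
    have h10 : A 1 0 = A 1 1 * A 1 0 := h 1 1 0
    by_cases hlam : A 0 1 = 0
    · have zero_00 : A 0 0 = 0 := by rw [h00, hlam, zero_mul]
      have zero_11 : A 1 1 = 0 := by rw [h11, hlam, mul_zero]
      have zero_10 : A 1 0 = 0 := by rw [h10, zero_11, zero_mul]
      refine absurd (Matrix.ext fun i j => ?_) hA
      fin_cases i <;> fin_cases j <;> assumption
    have one_00 : A 0 0 = 1 := mul_right_cancel₀ hlam (by rw [one_mul, ← h01])
    have one_11 : A 1 1 = 1 := mul_left_cancel₀ hlam (by rw [mul_one, ← h01'])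
    have inv_10 : A 1 0 = (A 0 1)⁻¹ := eq_inv_of_mul_eq_one_left (by rw [← h11, one_11])
    refine ⟨A 0 1, hlam, ?_⟩
    conv_lhs => rw [eta_fin_two A, one_00, one_11, inv_10]
  · rintro ⟨lam, hlam, rfl⟩ i j k
    fin_cases i <;> fin_cases j <;> fin_cases k <;> simp [hlam]

theorem schur_multiplicative_two_by_two (F : Type*) [Field F]
    (A : Matrix (Fin 2) (Fin 2) F) (hA : A ≠ 0) :
    (∀ B C : Matrix (Fin 2) (Fin 2) F,
        Matrix.hadamard A (B * C) = Matrix.hadamard A B * Matrix.hadamard A C) ↔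
      ∃ lam : F, lam ≠ 0 ∧ A = !![1, lam; lam⁻¹, 1] := by
  rw [forall_hadamard_mul_eq_iff, fin_two_cocycle_iff hA]
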